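/- arXiv:1907.01479 — 2 statements merged into one kernel-verified Lean document; each statement's English description precedes it below -/
import Mathlib

section
/- For every integer n, the analysis modulation matrix M̃[n] = [[β[n], β[n+N/2]], [α[n], α[n+N/2]]] satisfies: M̃[n]/√2 is a unitary 2×2 complex matrix; equivalently, |β[n]|² + |β[n+N/2]|² = 2, |α[n]|² + |α[n+N/2]|² = 2, and β[n]·conj(α[n]) + β[n+N/2]·conj(α[n+N/2]) = 0. -/
open Finset

noncomputable def omegaN (N : ℕ) : ℂ := Complex.exp (2 * Real.pi * Complex.I / N)

noncomputable def U4r (N r : ℕ) (n : ℤ) : ℝ :=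
  ((Real.cos (Real.pi * n / N)) ^ (4 * r) + (Real.sin (Real.pi * n / N)) ^ (4 * r)) / 2

noncomputable def betaF (N r : ℕ) (n : ℤ) : ℂ :=
  Complex.ofReal ((Real.cos (Real.pi * n / N)) ^ (2 * r) / Real.sqrt (U4r N r n))

noncomputable def alphaF (N r : ℕ) (n : ℤ) : ℂ :=
  omegaN N ^ n * Complex.ofReal ((Real.sin (Real.pi * n / N)) ^ (2 * r) / Real.sqrt (U4r N r n))

noncomputable def psi0 (N r : ℕ) (k : ℤ) : ℂ :=
  (N : ℂ)⁻¹ * ∑ n ∈ Finset.range N, omegaN N ^ (k * (n : ℤ)) * betaF N r n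

noncomputable def psi1 (N r : ℕ) (k : ℤ) : ℂ :=
  (N : ℂ)⁻¹ * ∑ n ∈ Finset.range N, omegaN N ^ (k * (n : ℤ)) * alphaF N r n

noncomputable def ip (N : ℕ) (x y : ℤ → ℂ) : ℂ :=
  ∑ k ∈ Finset.range N, x k * (starRingEnd ℂ) (y k)

/-! Replacing `n` by `n + N/2` turns the angle `πn/N` into `πn/N + π/2`, which maps
`(cos, sin)` to `(-sin, cos)`, leaves `U4r` unchanged and multiplies `ω^n` by `ω^(N/2) = -1`.
Hence `M̃[n] = !![x, y; w * y, -(w * x)]` with `x, y` real, `‖w‖ = 1`, and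
`x² + y² = (cos^(4r) + sin^(4r)) / U4r = 2`. -/

open Real

theorem pow_add_pow_pos_of_even {a b : ℝ} {m : ℕ} (hm : Even m) (hab : a ≠ 0 ∨ b ≠ 0) :
    0 < a ^ m + b ^ m := by
  rcases hab with ha | hb
  · exact add_pos_of_pos_of_nonneg (hm.pow_pos ha) (hm.pow_nonneg b)
  · exact add_pos_of_nonneg_of_pos (hm.pow_nonneg a) (hm.pow_pos hb)

theorem U4r_pos (N r : ℕ) (n : ℤ) : 0 < U4r N r n := by
  have hcs : cos (π * n / N) ≠ 0 ∨ sin (π * n / N) ≠ 0 := by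
    by_contra! h
    simpa [h.1, h.2] using sin_sq_add_cos_sq (π * n / N)
  exact half_pos (pow_add_pow_pos_of_even ⟨2 * r, by ring⟩ hcs)

theorem div_sqrt_sq_add_div_sqrt_sq {p q U : ℝ} (hU : 0 < U) (h : p ^ 2 + q ^ 2 = 2 * U) :
    (p / √U) ^ 2 + (q / √U) ^ 2 = 2 := by
  rw [div_pow, div_pow, sq_sqrt hU.le, ← add_div, h, mul_div_cancel_right₀ _ hU.ne']

theorem sq_add_sq_eq_two_mul_U4r (N r : ℕ) (n : ℤ) :
    (cos (π * n / N) ^ (2 * r)) ^ 2 + (sin (π * n / N) ^ (2 * r)) ^ 2 = 2 * U4r N r n := by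
  rw [U4r]; ring

theorem norm_omegaN_zpow (N : ℕ) (n : ℤ) : ‖omegaN N ^ n‖ = 1 := by
  rw [norm_zpow, omegaN,
    show 2 * π * Complex.I / N = ((2 * π / N : ℝ) : ℂ) * Complex.I by push_cast; ring,
    Complex.norm_exp_ofReal_mul_I, one_zpow]

section HalfPeriod

variable {N r : ℕ} {n : ℤ}

theorem angle_add_half (hN : Even N) (hN0 : N ≠ 0) :
    π * ((n + ((N / 2 : ℕ) : ℤ) : ℤ) : ℝ) / N = π * n / N + π / 2 := by
  obtain ⟨M, rfl⟩ := hN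
  have hM : (M : ℝ) ≠ 0 := by exact_mod_cast (by omega : M ≠ 0)
  rw [show (M + M) / 2 = M by omega]
  push_cast
  field_simp
  ring

theorem U4r_add_half (hN : Even N) (hN0 : N ≠ 0) :
    U4r N r (n + ((N / 2 : ℕ) : ℤ)) = U4r N r n := by
  rw [U4r, U4r, angle_add_half hN hN0, cos_add_pi_div_two, sin_add_pi_div_two,
    Even.neg_pow ⟨2 * r, by ring⟩, add_comm]

theorem betaF_add_half (hN : Even N) (hN0 : N ≠ 0) :
    betaF N r (n + ((N / 2 : ℕ) : ℤ)) =
      ((sin (π * n / N) ^ (2 * r) / √(U4r N r n) : ℝ) : ℂ) := by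
  rw [betaF, U4r_add_half hN hN0, angle_add_half hN hN0, cos_add_pi_div_two,
    Even.neg_pow ⟨r, by ring⟩]

theorem omegaN_zpow_half (hN : Even N) (hN0 : N ≠ 0) : omegaN N ^ ((N / 2 : ℕ) : ℤ) = -1 := by
  obtain ⟨M, rfl⟩ := hN
  have hM : (M : ℂ) ≠ 0 := by exact_mod_cast (by omega : M ≠ 0)
  rw [show (M + M) / 2 = M by omega, zpow_natCast, omegaN, ← Complex.exp_nat_mul,
    ← Complex.exp_pi_mul_I]
  congr 1
  push_cast
  field_simp
  ring

theorem alphaF_add_half (hN : Even N) (hN0 : N ≠ 0) :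
    alphaF N r (n + ((N / 2 : ℕ) : ℤ)) =
      -(omegaN N ^ n * ((cos (π * n / N) ^ (2 * r) / √(U4r N r n) : ℝ) : ℂ)) := by
  have hω : omegaN N ≠ 0 := Complex.exp_ne_zero _
  rw [alphaF, U4r_add_half hN hN0, angle_add_half hN hN0, sin_add_pi_div_two,
    zpow_add₀ hω, omegaN_zpow_half hN hN0]
  ring

end HalfPeriod

theorem norm_sq_rows_and_orthogonal {x y : ℝ} {w : ℂ} (hxy : x ^ 2 + y ^ 2 = 2)
    (hw : ‖w‖ = 1) :
    ‖(x : ℂ)‖ ^ 2 + ‖(y : ℂ)‖ ^ 2 = 2 ∧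
      ‖w * y‖ ^ 2 + ‖-(w * x)‖ ^ 2 = 2 ∧
      (x : ℂ) * starRingEnd ℂ (w * y) + y * starRingEnd ℂ (-(w * x)) = 0 := by
  refine ⟨?_, ?_, ?_⟩
  · simpa only [Complex.norm_real, Real.norm_eq_abs, sq_abs] using hxy
  · simpa only [norm_neg, norm_mul, hw, one_mul, Complex.norm_real, Real.norm_eq_abs, sq_abs,
      add_comm] using hxy
  · simp only [map_mul, map_neg, Complex.conj_ofReal]
    ring

theorem Matrix.inv_sqrt_two_smul_mem_unitaryGroup {a b c d : ℂ}
    (hab : ‖a‖ ^ 2 + ‖b‖ ^ 2 = 2) (hcd : ‖c‖ ^ 2 + ‖d‖ ^ 2 = 2)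
    (horth : a * starRingEnd ℂ c + b * starRingEnd ℂ d = 0) :
    ((√2 : ℂ)⁻¹ • !![a, b; c, d]) ∈ Matrix.unitaryGroup (Fin 2) ℂ := by
  have hself : ∀ z : ℂ, z * starRingEnd ℂ z = ((‖z‖ ^ 2 : ℝ) : ℂ) := fun z => by
    rw [Complex.mul_conj, Complex.normSq_eq_norm_sq]
  have horth' : c * starRingEnd ℂ a + d * starRingEnd ℂ b = 0 := by
    simpa [mul_comm] using congrArg (starRingEnd ℂ) horth
  have hscalar : (√2 : ℂ)⁻¹ * star (√2 : ℂ)⁻¹ = 2⁻¹ := by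
    rw [star_inv₀, Complex.star_def, Complex.conj_ofReal, ← mul_inv, ← Complex.ofReal_mul,
      Real.mul_self_sqrt zero_le_two]
    norm_num
  have hstar : star !![a, b; c, d] = !![star a, star c; star b, star d] := by
    rw [Matrix.eta_fin_two (star _)]
    simp
  rw [Matrix.mem_unitaryGroup_iff, star_smul, Matrix.smul_mul, Matrix.mul_smul, smul_smul,
    hscalar, hstar, Matrix.mul_fin_two]
  simp only [Complex.star_def, hself, ← Complex.ofReal_add, hab, hcd, horth, horth',
    Matrix.one_fin_two, Matrix.smul_of]
  norm_num

theorem stmt_2_general (j r : ℕ) (hj : 3 ≤ j) (N : ℕ) (hN : N = 2 ^ j) (n : ℤ) :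
    ((Real.sqrt 2 : ℂ)⁻¹ •
        !![betaF N r n, betaF N r (n + ((N / 2 : ℕ) : ℤ));
           alphaF N r n, alphaF N r (n + ((N / 2 : ℕ) : ℤ))] ∈
      Matrix.unitaryGroup (Fin 2) ℂ) ∧
    ‖betaF N r n‖ ^ 2 + ‖betaF N r (n + ((N / 2 : ℕ) : ℤ))‖ ^ 2 = 2 ∧
    ‖alphaF N r n‖ ^ 2 + ‖alphaF N r (n + ((N / 2 : ℕ) : ℤ))‖ ^ 2 = 2 ∧
    betaF N r n * (starRingEnd ℂ) (alphaF N r n) +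
      betaF N r (n + ((N / 2 : ℕ) : ℤ)) * (starRingEnd ℂ) (alphaF N r (n + ((N / 2 : ℕ) : ℤ))) =
        0 := by
  have hEven : Even N := hN ▸ (Nat.even_pow' (by omega)).2 even_two
  have hN0 : N ≠ 0 := hN ▸ pow_ne_zero j two_ne_zero
  rw [betaF_add_half hEven hN0, alphaF_add_half hEven hN0]
  obtain ⟨hβ, hα, hβα⟩ := norm_sq_rows_and_orthogonal
    (div_sqrt_sq_add_div_sqrt_sq (U4r_pos N r n) (sq_add_sq_eq_two_mul_U4r N r n))
    (norm_omegaN_zpow N n)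
  exact ⟨Matrix.inv_sqrt_two_smul_mem_unitaryGroup hβ hα hβα, hβ, hα, hβα⟩

/-- The analysis modulation matrix M̃[n] divided by √2 is unitary;
equivalently the rows of M̃[n] have squared norm 2 and are orthogonal. -/
theorem stmt_2 (j r : ℕ) (hj : 3 ≤ j) (hr : 1 ≤ r) (N : ℕ) (hN : N = 2 ^ j) (n : ℤ) :
    ((Real.sqrt 2 : ℂ)⁻¹ •
        !![betaF N r n, betaF N r (n + ((N / 2 : ℕ) : ℤ));
           alphaF N r n, alphaF N r (n + ((N / 2 : ℕ) : ℤ))] ∈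
      Matrix.unitaryGroup (Fin 2) ℂ) ∧
    ‖betaF N r n‖ ^ 2 + ‖betaF N r (n + ((N / 2 : ℕ) : ℤ))‖ ^ 2 = 2 ∧
    ‖alphaF N r n‖ ^ 2 + ‖alphaF N r (n + ((N / 2 : ℕ) : ℤ))‖ ^ 2 = 2 ∧
    betaF N r n * (starRingEnd ℂ) (alphaF N r n) +
      betaF N r (n + ((N / 2 : ℕ) : ℤ)) * (starRingEnd ℂ) (alphaF N r (n + ((N / 2 : ℕ) : ℤ))) =
        0 :=
  stmt_2_general j r hj N hN n
end

section
/- Let m ≥ 1 with 2^m dividing N, and let ψ ∈ Π[N] be a real-valued signal such that ψ̂[0] = 0, ψ̂[N/2] = 0, and the 2^m-sample shifts {ψ[·−2^m l] : l = 0,…,N/2^m−1} are orthonormal. Then the 2^m-sample shifts of the Hilbert-transform waveform θ = H(ψ) are also orthonormal: ⟨θ[·−2^m l], θ[·−2^m p]⟩ = δ[l−p] for all l, p ∈ {0,…,N/2^m−1}. -/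
open Finset

/-- Discrete Fourier transform of an N-periodic signal: x̂[n] = Σ_{k=0}^{N−1} x[k] ω^{−kn}. -/
noncomputable def dft (N : ℕ) (x : ℤ → ℂ) (n : ℤ) : ℂ :=
  ∑ k ∈ Finset.range N, x k * omegaN N ^ (-((k : ℤ) * n))

/-- Discrete periodic Hilbert transform: the signal whose DFT is −i·x̂[n] for 0 < n < N/2,
+i·x̂[n] for N/2 < n < N, and 0 for n = 0 and n = N/2. -/
noncomputable def HT (N : ℕ) (x : ℤ → ℂ) (k : ℤ) : ℂ :=
  (N : ℂ)⁻¹ * ∑ n ∈ Finset.range N,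
    (if n = 0 ∨ 2 * n = N then 0 else if 2 * n < N then -Complex.I else Complex.I) *
      dft N x n * omegaN N ^ (k * (n : ℤ))

/-! The Hilbert transform is the Fourier multiplier with symbol `∓i`, of modulus one except at
the frequencies `0` and `N/2`, where it vanishes. By Parseval it therefore preserves inner products
of signals whose spectrum vanishes at `0` and `N/2`, and like every Fourier multiplier it commutes
with translations. A translate of `ψ` has the same spectrum up to unimodular factors, so
`⟨H(τₐψ), H(τ_bψ)⟩ = ⟨τₐψ, τ_bψ⟩` for all shifts `a`, `b`. -/

open Complex ComplexConjugate

lemma omegaN_ne_zero (N : ℕ) : omegaN N ≠ 0 := exp_ne_zero _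

lemma norm_omegaN (N : ℕ) : ‖omegaN N‖ = 1 := by
  rw [omegaN, show 2 * (Real.pi : ℂ) * I / N = ((2 * Real.pi / N : ℝ) : ℂ) * I by push_cast; ring,
    norm_exp_ofReal_mul_I]

lemma conj_omegaN_zpow (N : ℕ) (t : ℤ) : conj (omegaN N ^ t) = omegaN N ^ (-t) := by
  rw [map_zpow₀, ← inv_eq_conj (norm_omegaN N), zpow_neg, inv_zpow]

section

variable {N : ℕ}

lemma omegaN_zpow_eq_one_iff (hN : N ≠ 0) (t : ℤ) : omegaN N ^ t = 1 ↔ (N : ℤ) ∣ t :=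
  (isPrimitiveRoot_exp N hN).zpow_eq_one_iff_dvd t

lemma omegaN_zpow_add_natCast_mul (hN : N ≠ 0) (s t : ℤ) :
    omegaN N ^ (s + N * t) = omegaN N ^ s := by
  rw [zpow_add₀ (omegaN_ne_zero N), (omegaN_zpow_eq_one_iff hN _).2 (dvd_mul_right _ _), mul_one]

lemma sum_range_omegaN_zpow_mul_sub (hN : N ≠ 0) {n n' : ℕ} (hn : n < N) (hn' : n' < N) :
    ∑ k ∈ range N, omegaN N ^ ((k : ℤ) * (n' - n)) = if n' = n then (N : ℂ) else 0 := by
  set ζ := omegaN N ^ ((n' : ℤ) - n)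
  have hpow (k : ℕ) : omegaN N ^ ((k : ℤ) * (n' - n)) = ζ ^ k := by
    rw [mul_comm, zpow_mul, zpow_natCast]
  simp_rw [hpow]
  split_ifs with h
  · simp [ζ, h]
  · have hζ : ζ ≠ 1 := by
      rw [Ne, omegaN_zpow_eq_one_iff hN]
      intro hdvd
      have := Int.eq_zero_of_abs_lt_dvd hdvd (abs_lt.2 ⟨by omega, by omega⟩)
      omega
    have hζN : ζ ^ N = 1 := by
      rw [← zpow_natCast, ← zpow_mul, omegaN_zpow_eq_one_iff hN]
      exact dvd_mul_left _ _
    rw [geom_sum_eq hζ, hζN, sub_self, zero_div]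

lemma Function.Periodic.sum_range_comp_add_one {M : Type*} [AddCommGroup M] {g : ℤ → M}
    (hg : Function.Periodic g N) : ∑ k ∈ range N, g (k + 1) = ∑ k ∈ range N, g k := by
  have h := (sum_range_succ' (fun k : ℕ => g k) N).symm.trans (sum_range_succ (fun k : ℕ => g k) N)
  push_cast at h
  rwa [← zero_add (N : ℤ), hg, add_left_inj] at h

lemma Function.Periodic.sum_range_comp_add {M : Type*} [AddCommGroup M] {g : ℤ → M}
    (hg : Function.Periodic g N) (a : ℤ) : ∑ k ∈ range N, g (k + a) = ∑ k ∈ range N, g k := by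
  have hstep (b : ℤ) : ∑ k ∈ range N, g (k + (b + 1)) = ∑ k ∈ range N, g (k + b) := by
    simpa only [add_assoc, add_comm (1 : ℤ)] using
      (hg.add_const b).sum_range_comp_add_one
  induction a using Int.induction_on with
  | zero => simp
  | succ b ih => rw [hstep, ih]
  | pred b ih => rw [← ih, ← hstep, sub_add_cancel]

lemma ip_eq_inv_mul_sum_dft_mul_conj (hN : N ≠ 0) (x y : ℤ → ℂ) :
    ip N x y = (N : ℂ)⁻¹ * ∑ n ∈ range N, dft N x n * conj (dft N y n) := by
  suffices ∑ n ∈ range N, dft N x n * conj (dft N y n) = N * ip N x y by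
    rw [this, inv_mul_cancel_left₀ (Nat.cast_ne_zero.2 hN)]
  calc ∑ n ∈ range N, dft N x n * conj (dft N y n)
      = ∑ k ∈ range N, ∑ k' ∈ range N,
          x k * conj (y k') * ∑ n ∈ range N, omegaN N ^ ((n : ℤ) * (k' - k)) := by
        simp_rw [dft, map_sum, map_mul, conj_omegaN_zpow, sum_mul_sum, mul_sum]
        rw [sum_comm]
        refine sum_congr rfl fun k _ => ?_
        rw [sum_comm]
        refine sum_congr rfl fun k' _ => sum_congr rfl fun n _ => ?_
        rw [neg_neg, show (n : ℤ) * (k' - k) = -(k * n) + k' * n by ring,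
          zpow_add₀ (omegaN_ne_zero N)]
        ring
    _ = N * ip N x y := by
        rw [ip, mul_sum]
        refine sum_congr rfl fun k hk => ?_
        rw [sum_congr rfl fun k' hk' => by
          rw [sum_range_omegaN_zpow_mul_sub hN (mem_range.1 hk) (mem_range.1 hk')]]
        simp only [mul_ite, mul_zero, sum_ite_eq', if_pos hk]
        ring

lemma dft_comp_sub (hN : N ≠ 0) {x : ℤ → ℂ} (hx : Function.Periodic x N) (a n : ℤ) :
    dft N (fun k => x (k - a)) n = omegaN N ^ (-(a * n)) * dft N x n := by
  have hg : Function.Periodic (fun k => x k * omegaN N ^ (-(k * n))) N := fun k => by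
    dsimp only
    rw [hx, show -((k + N) * n) = -(k * n) + N * (-n) by ring, omegaN_zpow_add_natCast_mul hN]
  rw [dft, dft, ← hg.sum_range_comp_add (-a), mul_sum]
  refine sum_congr rfl fun k _ => ?_
  rw [← sub_eq_add_neg, mul_left_comm, ← zpow_add₀ (omegaN_ne_zero N)]
  congr 2
  ring

def hilbertMultiplier (N n : ℕ) : ℂ :=
  if n = 0 ∨ 2 * n = N then 0 else if 2 * n < N then -I else I

lemma hilbertMultiplier_mul_conj {n : ℕ} (h0 : n ≠ 0) (hhalf : 2 * n ≠ N) :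
    hilbertMultiplier N n * conj (hilbertMultiplier N n) = 1 := by
  rw [hilbertMultiplier, if_neg (by tauto)]
  split_ifs <;> simp

lemma HT_apply (x : ℤ → ℂ) (k : ℤ) :
    HT N x k = (N : ℂ)⁻¹ * ∑ n ∈ range N, hilbertMultiplier N n * dft N x n * omegaN N ^ (k * n) :=
  rfl

lemma HT_comp_sub (hN : N ≠ 0) {x : ℤ → ℂ} (hx : Function.Periodic x N) (a : ℤ) :
    HT N (fun k => x (k - a)) = fun k => HT N x (k - a) := by
  funext k
  simp_rw [HT_apply, dft_comp_sub hN hx]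
  refine congrArg _ (sum_congr rfl fun n _ => ?_)
  rw [sub_mul, sub_eq_add_neg, zpow_add₀ (omegaN_ne_zero N), ← neg_mul]
  ring

lemma dft_HT (hN : N ≠ 0) (x : ℤ → ℂ) {n : ℕ} (hn : n < N) :
    dft N (HT N x) n = hilbertMultiplier N n * dft N x n := by
  calc dft N (HT N x) n
      = (N : ℂ)⁻¹ * ∑ n' ∈ range N, hilbertMultiplier N n' * dft N x n' *
          ∑ k ∈ range N, omegaN N ^ ((k : ℤ) * (n' - n)) := by
        rw [dft]
        simp_rw [HT_apply, mul_sum, sum_mul]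
        rw [sum_comm]
        refine sum_congr rfl fun n' _ => sum_congr rfl fun k _ => ?_
        rw [mul_sub, zpow_sub₀ (omegaN_ne_zero N), div_eq_mul_inv, ← zpow_neg]
        ring
    _ = hilbertMultiplier N n * dft N x n := by
        rw [sum_congr rfl fun n' hn' => by
          rw [sum_range_omegaN_zpow_mul_sub hN hn (mem_range.1 hn')]]
        simp only [mul_ite, mul_zero, sum_ite_eq', mem_range.2 hn, if_true]
        rw [mul_comm, mul_inv_cancel_right₀ (Nat.cast_ne_zero.2 hN)]

lemma ip_HT_HT (hN : N ≠ 0) {x : ℤ → ℂ} (y : ℤ → ℂ) (h0 : dft N x 0 = 0)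
    (hhalf : dft N x ((N : ℤ) / 2) = 0) : ip N (HT N x) (HT N y) = ip N x y := by
  rw [ip_eq_inv_mul_sum_dft_mul_conj hN, ip_eq_inv_mul_sum_dft_mul_conj hN]
  refine congrArg _ (sum_congr rfl fun n hn => ?_)
  rw [dft_HT hN x (mem_range.1 hn), dft_HT hN y (mem_range.1 hn), map_mul]
  by_cases hn0 : n = 0
  · simp [hn0, h0]
  by_cases hn2 : 2 * n = N
  · rw [show (n : ℤ) = (N : ℤ) / 2 by omega, hhalf]
    simp
  calc _ = hilbertMultiplier N n * conj (hilbertMultiplier N n) *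
        (dft N x n * conj (dft N y n)) := by ring
    _ = _ := by rw [hilbertMultiplier_mul_conj hn0 hn2, one_mul]

end

theorem stmt_10_general (m : ℕ) (N : ℕ)
    (ψ : ℤ → ℂ) (hper : ∀ k : ℤ, ψ (k + N) = ψ k)
    (h0 : dft N ψ 0 = 0) (hN2 : dft N ψ ((N : ℤ) / 2) = 0)
    (horth : ∀ l p : ℕ, l < N / 2 ^ m → p < N / 2 ^ m →
      ip N (fun k => ψ (k - 2 ^ m * (l : ℤ))) (fun k => ψ (k - 2 ^ m * (p : ℤ))) =
        if l = p then 1 else 0) :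
    ∀ l p : ℕ, l < N / 2 ^ m → p < N / 2 ^ m →
      ip N (fun k => HT N ψ (k - 2 ^ m * (l : ℤ))) (fun k => HT N ψ (k - 2 ^ m * (p : ℤ))) =
        if l = p then 1 else 0 := by
  intro l p hl hp
  have hN : N ≠ 0 := by
    rintro rfl
    simp at hl
  have hshift_dft_eq_zero (a : ℤ) {n : ℤ} (hn : dft N ψ n = 0) :
      dft N (fun k => ψ (k - a)) n = 0 := by
    rw [dft_comp_sub hN hper, hn, mul_zero]
  rw [← HT_comp_sub hN hper, ← HT_comp_sub hN hper,
    ip_HT_HT hN _ (hshift_dft_eq_zero _ h0) (hshift_dft_eq_zero _ hN2)]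
  exact horth l p hl hp

/-- If ψ is real-valued with ψ̂[0] = ψ̂[N/2] = 0 and orthonormal 2^m-sample
shifts, then the 2^m-sample shifts of θ = H(ψ) are also orthonormal. -/
theorem stmt_10 (j m : ℕ) (hj : 3 ≤ j) (hm : 1 ≤ m) (hmj : m ≤ j) (N : ℕ) (hN : N = 2 ^ j)
    (ψ : ℤ → ℂ) (hper : ∀ k : ℤ, ψ (k + N) = ψ k) (hreal : ∀ k : ℤ, (ψ k).im = 0)
    (h0 : dft N ψ 0 = 0) (hN2 : dft N ψ ((N : ℤ) / 2) = 0)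
    (horth : ∀ l p : ℕ, l < N / 2 ^ m → p < N / 2 ^ m →
      ip N (fun k => ψ (k - 2 ^ m * (l : ℤ))) (fun k => ψ (k - 2 ^ m * (p : ℤ))) =
        if l = p then 1 else 0) :
    ∀ l p : ℕ, l < N / 2 ^ m → p < N / 2 ^ m →
      ip N (fun k => HT N ψ (k - 2 ^ m * (l : ℤ))) (fun k => HT N ψ (k - 2 ^ m * (p : ℤ))) =
        if l = p then 1 else 0 :=
  stmt_10_general m N ψ hper h0 hN2 horth
end
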